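/- arXiv:math-ph/0402053 — 3 statements merged into one kernel-verified Lean document; each statement's English description precedes it below -/
import Mathlib

section
/- Let x_{-2N+1} < x_{-2N+2} < ⋯ < x_0 be integers. Then the product ∏_{j=-N+1}^{0} e(x_{2j}) · o(x_{2j-1}), where e(x) = (1+(-1)^x)/2 and o(x) = (1-(-1)^x)/2, equals the Pfaffian of the antisymmetric matrix [Sᵗ_{x_i,x_j}]_{i,j=-2N+1,…,0}, where S_{x,y} = ((1+sgn(x-y)(-1)^x)/2)·((1-sgn(x-y)(-1)^y)/2)·sgn(x-y). -/
open Finset Matrix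

/-- The Pfaffian of a `2N × 2N` matrix: sum over permutations giving the
canonical enumerations of perfect matchings. -/
noncomputable def pfaffian {N : ℕ} (A : Matrix (Fin (2 * N)) (Fin (2 * N)) ℝ) : ℝ :=
  ∑ σ ∈ Finset.univ.filter (fun σ : Equiv.Perm (Fin (2 * N)) =>
      (∀ i : Fin N, σ ⟨2 * i.1, by have := i.2; omega⟩ < σ ⟨2 * i.1 + 1, by have := i.2; omega⟩) ∧
      (∀ i j : Fin N, i < j →
        σ ⟨2 * i.1, by have := i.2; omega⟩ < σ ⟨2 * j.1, by have := j.2; omega⟩)),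
    ((Equiv.Perm.sign σ : ℤ) : ℝ) *
      ∏ i : Fin N, A (σ ⟨2 * i.1, by have := i.2; omega⟩) (σ ⟨2 * i.1 + 1, by have := i.2; omega⟩)

/-- `(-1)^x` for an integer `x`. -/
noncomputable def negOne (x : ℤ) : ℝ := if Even x then 1 else -1

/-- The kernel `S_{x,y} = ((1+sgn(x-y)(-1)^x)/2)·((1-sgn(x-y)(-1)^y)/2)·sgn(x-y)`. -/
noncomputable def Sker (x y : ℤ) : ℝ :=
  ((1 + (Int.sign (x - y) : ℝ) * negOne x) / 2) *
    ((1 - (Int.sign (x - y) : ℝ) * negOne y) / 2) * (Int.sign (x - y) : ℝ)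

lemma sker_of_lt {x y : ℤ} (h : y < x) :
    Sker x y = (if Even x then (1:ℝ) else 0) * (if Odd y then (1:ℝ) else 0) := by
  have hs : (x - y).sign = 1 := Int.sign_eq_one_of_pos (by omega)
  simp only [Sker, negOne, hs, Int.cast_one, one_mul, mul_one]
  rcases Int.even_or_odd x with hx | hx <;> rcases Int.even_or_odd y with hy | hy
  · norm_num [hx, hy, Int.not_odd_iff_even.mpr hy]
  · norm_num [hx, hy, Int.not_even_iff_odd.mpr hy]
  · norm_num [Int.not_even_iff_odd.mpr hx, hy, Int.not_odd_iff_even.mpr hy]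
  · norm_num [Int.not_even_iff_odd.mpr hx, hy]

lemma prod_range_double (g : ℕ → ℝ) : ∀ n : ℕ,
    ∏ k ∈ Finset.range (2*n), g k = ∏ m ∈ Finset.range n, (g (2*m) * g (2*m+1))
  | 0 => by simp
  | (n+1) => by
    have h : 2*(n+1) = (2*n+1)+1 := by ring
    rw [h, prod_range_succ, prod_range_succ, prod_range_succ, prod_range_double g n]
    ring

lemma prod_fin_double {N : ℕ} (t : Fin (2*N) → ℝ) :
    ∏ k, t k = ∏ m : Fin N,
      (t ⟨2*m.1, by have := m.2; omega⟩ * t ⟨2*m.1+1, by have := m.2; omega⟩) := by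
  have h1 : ∏ k, t k = ∏ k ∈ range (2*N), (if h : k < 2*N then t ⟨k,h⟩ else 1) := by
    rw [← Fin.prod_univ_eq_prod_range]
    exact prod_congr rfl fun i _ => by rw [dif_pos i.2, Fin.eta]
  rw [h1, prod_range_double]
  rw [← Fin.prod_univ_eq_prod_range (fun m => (if h : 2*m < 2*N then t ⟨2*m,h⟩ else 1) *
        (if h : 2*m+1 < 2*N then t ⟨2*m+1,h⟩ else 1))]
  exact prod_congr rfl fun m _ => by
    have := m.2
    rw [dif_pos (by omega : 2*(m:ℕ) < 2*N), dif_pos (by omega : 2*(m:ℕ)+1 < 2*N)]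

lemma perm_strictMono_eq_one {n : ℕ} (σ : Equiv.Perm (Fin n)) (h : StrictMono ⇑σ) : σ = 1 := by
  have hr : Set.range ⇑σ = Set.range (id : Fin n → Fin n) := by
    rw [σ.surjective.range_eq, Set.range_id]
  have hwf : WellFoundedLT (Fin n) := inferInstance
  have := (h.range_inj (strictMono_id (α := Fin n))).1 hr
  exact Equiv.ext fun i => congrFun this i

def Qprop {N : ℕ} (σ : Equiv.Perm (Fin (2*N))) (k : ℕ) : Prop :=
  ∃ h : 2*k+2 < 2*N, σ ⟨2*k+2, h⟩ < σ ⟨2*k+1, by omega⟩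

instance {N : ℕ} (σ : Equiv.Perm (Fin (2*N))) : DecidablePred (Qprop σ) := fun _ =>
  exists_prop_decidable _

open scoped Classical in
noncomputable def gInv {N : ℕ} (σ : Equiv.Perm (Fin (2*N))) : Equiv.Perm (Fin (2*N)) :=
  if h : ∃ k, Qprop σ k then
    σ * Equiv.swap ⟨2*(Nat.find h)+1, by obtain ⟨h2,-⟩ := Nat.find_spec h; omega⟩
        ⟨2*(Nat.find h)+3, by obtain ⟨h2,-⟩ := Nat.find_spec h; omega⟩
  else σ

lemma exists_Q {N : ℕ} (σ : Equiv.Perm (Fin (2*N)))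
    (ha : ∀ i : Fin N, σ ⟨2*i.1, by have := i.2; omega⟩ < σ ⟨2*i.1+1, by have := i.2; omega⟩)
    (hne : σ ≠ 1) : ∃ k, Qprop σ k := by
  by_contra hcon
  push_neg at hcon
  apply hne
  have step : ∀ (a : ℕ) (h : a+1 < 2*N), σ ⟨a, by omega⟩ < σ ⟨a+1, h⟩ := by
    intro a h
    rcases Nat.even_or_odd a with he | ho
    · obtain ⟨m, hm⟩ := he
      have hmN : m < N := by omega
      have h2 := ha ⟨m, hmN⟩
      have e1 : (⟨2*(⟨m,hmN⟩ : Fin N).1, by omega⟩ : Fin (2*N)) = ⟨a, by omega⟩ := by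
        simp only [Fin.mk.injEq]; omega
      have e2 : (⟨2*(⟨m,hmN⟩ : Fin N).1+1, by omega⟩ : Fin (2*N)) = ⟨a+1, h⟩ := by
        simp only [Fin.mk.injEq]; omega
      rwa [e1, e2] at h2
    · obtain ⟨k, hk⟩ := ho
      have h2 : 2*k+2 < 2*N := by omega
      have hle : ¬ (σ ⟨2*k+2, h2⟩ < σ ⟨2*k+1, by omega⟩) := fun hlt => hcon k ⟨h2, hlt⟩
      have hne2 : σ ⟨2*k+1, by omega⟩ ≠ σ ⟨2*k+2, h2⟩ := by
        intro he
        have := σ.injective he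
        simp only [Fin.mk.injEq] at this
        omega
      have h3 : σ ⟨2*k+1, by omega⟩ < σ ⟨2*k+2, h2⟩ := lt_of_le_of_ne (not_lt.mp hle) hne2
      have e1 : (⟨2*k+1, by omega⟩ : Fin (2*N)) = ⟨a, by omega⟩ := by
        simp only [Fin.mk.injEq]; omega
      have e2 : (⟨2*k+2, h2⟩ : Fin (2*N)) = ⟨a+1, h⟩ := by
        simp only [Fin.mk.injEq]; omega
      rwa [e1, e2] at h3
  have chain : ∀ (b : ℕ) (hb : b < 2*N) (a : ℕ) (hab : a < b), σ ⟨a, by omega⟩ < σ ⟨b, hb⟩ := by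
    intro b
    induction b with
    | zero => intro _ a hab; omega
    | succ c ih =>
      intro hb a ha'
      rcases Nat.lt_or_ge a c with hc | hc
      · exact lt_trans (ih (by omega) a hc) (step c hb)
      · have : a = c := by omega
        subst this
        exact step a hb
  apply perm_strictMono_eq_one σ
  intro u v huv
  have := chain v.1 v.2 u.1 huv
  simpa [Fin.eta] using this

noncomputable def fterm {N : ℕ} (x : Fin (2*N) → ℤ) (σ : Equiv.Perm (Fin (2*N))) : ℝ :=
  ((Equiv.Perm.sign σ : ℤ) : ℝ) *
    ∏ i : Fin N, Sker (x (σ ⟨2 * i.1 + 1, by have := i.2; omega⟩)) (x (σ ⟨2 * i.1, by have := i.2; omega⟩))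

lemma fterm_eq {N : ℕ} (x : Fin (2*N) → ℤ) (hx : StrictMono x) (σ : Equiv.Perm (Fin (2*N)))
    (ha : ∀ i : Fin N, σ ⟨2*i.1, by have := i.2; omega⟩ < σ ⟨2*i.1+1, by have := i.2; omega⟩) :
    fterm x σ = ((Equiv.Perm.sign σ : ℤ) : ℝ) *
      ((∏ i : Fin N, (if Even (x (σ ⟨2*i.1+1, by have := i.2; omega⟩)) then (1:ℝ) else 0)) *
       (∏ i : Fin N, (if Odd (x (σ ⟨2*i.1, by have := i.2; omega⟩)) then (1:ℝ) else 0))) := by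
  rw [fterm]
  congr 1
  rw [← prod_mul_distrib]
  exact prod_congr rfl fun i _ => sker_of_lt (hx (ha i))

lemma lt2 {N : ℕ} (m : Fin N) : 2*m.1 < 2*N := by have := m.2; omega
lemma lt2' {N : ℕ} (m : Fin N) : 2*m.1+1 < 2*N := by have := m.2; omega
lemma wm1 {N i : ℕ} (h : 2*i+2 < 2*N) : 2*i+1 < 2*N := by omega
lemma wm0 {N i : ℕ} (h : 2*i+2 < 2*N) : 2*i < 2*N := by omega

lemma swap_mul_apply_ne {n : ℕ} (σ : Equiv.Perm (Fin n)) (p q r : Fin n)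
    (h1 : r ≠ p) (h2 : r ≠ q) : (σ * Equiv.swap p q) r = σ r := by
  rw [Equiv.Perm.mul_apply, Equiv.swap_apply_of_ne_of_ne h1 h2]

lemma swap_mul_apply_left {n : ℕ} (σ : Equiv.Perm (Fin n)) (p q : Fin n) :
    (σ * Equiv.swap p q) p = σ q := by
  rw [Equiv.Perm.mul_apply, Equiv.swap_apply_left]

lemma swap_mul_apply_right {n : ℕ} (σ : Equiv.Perm (Fin n)) (p q : Fin n) :
    (σ * Equiv.swap p q) q = σ p := by
  rw [Equiv.Perm.mul_apply, Equiv.swap_apply_right]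

lemma swap_mul_cancel {n : ℕ} (σ : Equiv.Perm (Fin n)) (p q : Fin n) :
    σ * Equiv.swap p q * Equiv.swap p q = σ := by
  rw [mul_assoc, Equiv.swap_mul_self, mul_one]

lemma sign_mul_swap {n : ℕ} (σ : Equiv.Perm (Fin n)) (p q : Fin n) (h : p ≠ q) :
    Equiv.Perm.sign (σ * Equiv.swap p q) = - Equiv.Perm.sign σ := by
  rw [Equiv.Perm.sign_mul, Equiv.Perm.sign_swap h, mul_neg_one]

lemma gInv_eq {N : ℕ} (σ : Equiv.Perm (Fin (2*N))) (h : ∃ k, Qprop σ k) {i : ℕ}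
    (hi : Nat.find h = i) (hp : 2*i+1 < 2*N) (hq : 2*i+3 < 2*N) :
    gInv σ = σ * Equiv.swap ⟨2*i+1, hp⟩ ⟨2*i+3, hq⟩ := by
  subst hi
  rw [gInv, dif_pos h]

/-- an equality hidden from `omega` -/
def HiddenEq (a b : ℕ) : Prop := a = b
lemma HiddenEq.out {a b : ℕ} (h : HiddenEq a b) : a = b := h

lemma gInv_props {N : ℕ} (x : Fin (2*N) → ℤ) (hx : StrictMono x) (σ : Equiv.Perm (Fin (2*N)))
    (ha : ∀ i : Fin N, σ ⟨2*i.1, by have := i.2; omega⟩ < σ ⟨2*i.1+1, by have := i.2; omega⟩)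
    (hb : ∀ i j : Fin N, i < j → σ ⟨2*i.1, by have := i.2; omega⟩ < σ ⟨2*j.1, by have := j.2; omega⟩)
    (hne : σ ≠ 1) :
    (∀ i : Fin N, (gInv σ) ⟨2*i.1, by have := i.2; omega⟩ < (gInv σ) ⟨2*i.1+1, by have := i.2; omega⟩) ∧
    (∀ i j : Fin N, i < j → (gInv σ) ⟨2*i.1, by have := i.2; omega⟩ < (gInv σ) ⟨2*j.1, by have := j.2; omega⟩) ∧
    gInv σ ≠ 1 ∧ gInv (gInv σ) = σ ∧ gInv σ ≠ σ ∧ fterm x (gInv σ) = - fterm x σ := by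
  classical
  have hex : ∃ k, Qprop σ k := exists_Q σ ha hne
  have hspec := Nat.find_spec hex
  have hmin := fun k (hk : k < Nat.find hex) => Nat.find_min hex hk
  obtain ⟨i, hidef⟩ : ∃ i, HiddenEq (Nat.find hex) i := ⟨_, rfl⟩
  rw [hidef.out] at hspec hmin
  obtain ⟨h2, hlt⟩ := hspec
  have h3 : 2*i+3 < 2*N := by omega
  have hiN : i + 1 < N := by omega
  obtain ⟨p, hpdef⟩ : ∃ p' : Fin (2*N), p' = ⟨2*i+1, by omega⟩ := ⟨_, rfl⟩
  obtain ⟨q, hqdef⟩ : ∃ q' : Fin (2*N), q' = ⟨2*i+3, h3⟩ := ⟨_, rfl⟩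
  obtain ⟨τ, hτdef⟩ : ∃ τ', τ' = σ * Equiv.swap p q := ⟨_, rfl⟩
  have hpq : p ≠ q := by
    rw [hpdef, hqdef]; simp only [ne_eq, Fin.mk.injEq]; omega
  have hτ : gInv σ = τ := by
    rw [hτdef, hpdef, hqdef]
    exact gInv_eq σ hex hidef.out (by omega) h3
  have happ : ∀ (a : ℕ) (h : a < 2*N), a ≠ 2*i+1 → a ≠ 2*i+3 → τ ⟨a,h⟩ = σ ⟨a,h⟩ := by
    intro a h hne1 hne3
    rw [hτdef, hpdef, hqdef]
    exact swap_mul_apply_ne σ _ _ _ (Fin.ne_of_val_ne hne1) (Fin.ne_of_val_ne hne3)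
  have happ1 : τ p = σ q := by
    rw [hτdef]; exact swap_mul_apply_left σ p q
  have happ2 : τ q = σ p := by
    rw [hτdef]; exact swap_mul_apply_right σ p q
  have hiN0 : i < N := Nat.lt_of_succ_lt hiN
  have hai1 : σ ⟨2*i+2, h2⟩ < σ ⟨2*i+3, h3⟩ := by
    have h := ha ⟨i+1, hiN⟩
    convert h using 2 <;> simp only [Fin.mk.injEq] <;> omega
  have hQτ : τ ⟨2*i+2, h2⟩ < τ p := by
    rw [happ (2*i+2) h2 (by omega) (by omega), happ1, hqdef]
    exact hai1
  have ha' : ∀ m : Fin N, τ ⟨2*m.1, lt2 m⟩ < τ ⟨2*m.1+1, lt2' m⟩ := by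
    intro m
    have hm := m.2
    have he : τ ⟨2*m.1, lt2 m⟩ = σ ⟨2*m.1, lt2 m⟩ := happ _ _ (by omega) (by omega)
    by_cases hmi : m.1 = i
    · have e1 : (⟨2*m.1+1, lt2' m⟩ : Fin (2*N)) = p := by
        rw [hpdef]; simp only [Fin.mk.injEq]; omega
      rw [he, e1, happ1, hqdef]
      have hlow : σ ⟨2*m.1, lt2 m⟩ < σ ⟨2*i+2, h2⟩ := by
        have h := hb ⟨i, hiN0⟩ ⟨i+1, hiN⟩ (by rw [Fin.mk_lt_mk]; omega)
        convert h using 2 <;> simp only [Fin.mk.injEq] <;> omega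
      exact lt_trans hlow hai1
    · by_cases hmi2 : m.1 = i+1
      · have e1 : (⟨2*m.1+1, lt2' m⟩ : Fin (2*N)) = q := by
          rw [hqdef]; simp only [Fin.mk.injEq]; omega
        have e2 : (⟨2*m.1, lt2 m⟩ : Fin (2*N)) = (⟨2*i+2, h2⟩ : Fin (2*N)) := by
          simp only [Fin.mk.injEq]; omega
        rw [he, e1, happ2, e2, hpdef]
        exact hlt
      · rw [he, happ _ _ (by omega) (by omega)]
        exact ha m
  have hb' : ∀ m j : Fin N, m < j → τ ⟨2*m.1, lt2 m⟩ < τ ⟨2*j.1, lt2 j⟩ := by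
    intro m j hmj
    have hm := m.2; have hj := j.2
    rw [happ _ _ (by omega) (by omega), happ _ _ (by omega) (by omega)]
    exact hb m j hmj
  have hne2 : τ ≠ 1 := by
    intro h1
    rw [h1, hpdef] at hQτ
    simp only [Equiv.Perm.one_apply, Fin.mk_lt_mk] at hQτ
    omega
  have hexτ : ∃ k, Qprop τ k := by
    refine ⟨i, h2, ?_⟩
    rw [hpdef] at hQτ
    exact hQτ
  have hfind : HiddenEq (Nat.find hexτ) i := by
    show Nat.find hexτ = i
    rw [Nat.find_eq_iff]
    constructor
    · refine ⟨h2, ?_⟩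
      rw [hpdef] at hQτ
      exact hQτ
    · intro k hk hQk
      obtain ⟨hk2, hklt⟩ := hQk
      apply hmin k hk
      refine ⟨hk2, ?_⟩
      rw [← happ (2*k+2) hk2 (by omega) (by omega), ← happ (2*k+1) (by omega) (by omega) (by omega)]
      exact hklt
  have hgτ : gInv τ = τ * Equiv.swap p q := by
    rw [hpdef, hqdef]
    exact gInv_eq τ hexτ hfind.out (by omega) h3
  have hinv : gInv τ = σ := by
    rw [hgτ, hτdef]; exact swap_mul_cancel σ p q
  have hneσ : τ ≠ σ := by
    intro h
    rw [h] at happ1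
    have := σ.injective happ1
    exact hpq this
  have hsign : Equiv.Perm.sign τ = - Equiv.Perm.sign σ := by
    rw [hτdef]; exact sign_mul_swap σ p q hpq
  have hprodu : (∏ m : Fin N, (if Even (x (τ ⟨2*m.1+1, lt2' m⟩)) then (1:ℝ) else 0))
      = ∏ m : Fin N, (if Even (x (σ ⟨2*m.1+1, lt2' m⟩)) then (1:ℝ) else 0) := by
    rw [← Equiv.prod_comp (Equiv.swap (⟨i, hiN0⟩ : Fin N) ⟨i+1, hiN⟩)
        (fun m => if Even (x (σ ⟨2*m.1+1, lt2' m⟩)) then (1:ℝ) else 0)]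
    apply prod_congr rfl
    intro m _
    have hm := m.2
    by_cases hmi : m = (⟨i, hiN0⟩ : Fin N)
    · rw [hmi, Equiv.swap_apply_left]
      have e1 : (⟨2*(⟨i, hiN0⟩ : Fin N).1+1, lt2' ⟨i, hiN0⟩⟩ : Fin (2*N)) = p := by
        rw [hpdef]; try first | rfl | (simp only [Fin.mk.injEq]; omega)
      have key : τ ⟨2*(⟨i, hiN0⟩ : Fin N).1+1, lt2' ⟨i, hiN0⟩⟩
          = σ ⟨2*(⟨i+1, hiN⟩ : Fin N).1+1, lt2' ⟨i+1, hiN⟩⟩ := by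
        rw [e1, happ1, hqdef]
        try first
        | rfl
        | exact congrArg _ (by simp only [Fin.mk.injEq]; omega)
      rw [key]
    · by_cases hmi2 : m = (⟨i+1, hiN⟩ : Fin N)
      · rw [hmi2, Equiv.swap_apply_right]
        have e1 : (⟨2*(⟨i+1, hiN⟩ : Fin N).1+1, lt2' ⟨i+1, hiN⟩⟩ : Fin (2*N)) = q := by
          rw [hqdef]; try first | rfl | (simp only [Fin.mk.injEq]; omega)
        have key : τ ⟨2*(⟨i+1, hiN⟩ : Fin N).1+1, lt2' ⟨i+1, hiN⟩⟩
            = σ ⟨2*(⟨i, hiN0⟩ : Fin N).1+1, lt2' ⟨i, hiN0⟩⟩ := by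
          rw [e1, happ2, hpdef]
          try first
          | rfl
          | exact congrArg _ (by simp only [Fin.mk.injEq]; omega)
        rw [key]
      · rw [Equiv.swap_apply_of_ne_of_ne hmi hmi2]
        have hne1 : 2*m.1+1 ≠ 2*i+1 := by
          intro h; apply hmi; apply Fin.ext; simp; omega
        have hne3 : 2*m.1+1 ≠ 2*i+3 := by
          intro h; apply hmi2; apply Fin.ext; simp; omega
        rw [happ _ _ hne1 hne3]
  have hprodv : (∏ m : Fin N, (if Odd (x (τ ⟨2*m.1, lt2 m⟩)) then (1:ℝ) else 0))
      = ∏ m : Fin N, (if Odd (x (σ ⟨2*m.1, lt2 m⟩)) then (1:ℝ) else 0) := by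
    apply prod_congr rfl
    intro m _
    have hm := m.2
    rw [happ _ _ (by omega) (by omega)]
  have hfneg : fterm x τ = - fterm x σ := by
    rw [fterm_eq x hx τ ha', fterm_eq x hx σ ha, hsign, hprodu, hprodv]
    push_cast
    ring
  rw [hτ]
  exact ⟨ha', hb', hne2, hinv, hneσ, hfneg⟩

/-- Let `x_{-2N+1} < ⋯ < x_0` be integers (here indexed by `Fin (2N)`, index `k`
corresponding to `i = k - (2N-1)`, so `i` is even iff `k` is odd).  Then the product
`∏ e(x at even i) · o(x at odd i)` equals the Pfaffian of `[Sᵗ_{x_i,x_j}]`. -/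
theorem prod_parity_eq_pfaffian {N : ℕ} (x : Fin (2 * N) → ℤ) (hx : StrictMono x) :
    (∏ k : Fin (2 * N),
        if Odd (k : ℕ) then (if Even (x k) then (1 : ℝ) else 0)
        else (if Odd (x k) then (1 : ℝ) else 0)) =
      pfaffian (fun i j => Sker (x j) (x i)) := by
  classical
  have hpf : pfaffian (fun i j => Sker (x j) (x i)) =
      ∑ σ ∈ Finset.univ.filter (fun σ : Equiv.Perm (Fin (2 * N)) =>
        (∀ i : Fin N, σ ⟨2 * i.1, by have := i.2; omega⟩ < σ ⟨2 * i.1 + 1, by have := i.2; omega⟩) ∧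
        (∀ i j : Fin N, i < j →
          σ ⟨2 * i.1, by have := i.2; omega⟩ < σ ⟨2 * j.1, by have := j.2; omega⟩)),
        fterm x σ := rfl
  rw [hpf]
  have h1mem : (1 : Equiv.Perm (Fin (2*N))) ∈ Finset.univ.filter (fun σ : Equiv.Perm (Fin (2 * N)) =>
        (∀ i : Fin N, σ ⟨2 * i.1, by have := i.2; omega⟩ < σ ⟨2 * i.1 + 1, by have := i.2; omega⟩) ∧
        (∀ i j : Fin N, i < j →
          σ ⟨2 * i.1, by have := i.2; omega⟩ < σ ⟨2 * j.1, by have := j.2; omega⟩)) := by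
    rw [mem_filter]
    refine ⟨mem_univ _, fun i => ?_, fun i j hij => ?_⟩
    · simp only [Equiv.Perm.one_apply, Fin.mk_lt_mk]
      omega
    · simp only [Equiv.Perm.one_apply, Fin.mk_lt_mk]
      have := hij
      rw [Fin.lt_def] at this
      omega
  rw [← Finset.sum_erase_add _ _ h1mem]
  have hzero : ∑ σ ∈ (Finset.univ.filter (fun σ : Equiv.Perm (Fin (2 * N)) =>
        (∀ i : Fin N, σ ⟨2 * i.1, by have := i.2; omega⟩ < σ ⟨2 * i.1 + 1, by have := i.2; omega⟩) ∧
        (∀ i j : Fin N, i < j →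
          σ ⟨2 * i.1, by have := i.2; omega⟩ < σ ⟨2 * j.1, by have := j.2; omega⟩))).erase 1,
      fterm x σ = 0 := by
    apply Finset.sum_involution (fun σ _ => gInv σ)
    · intro σ hσ
      rw [mem_erase, mem_filter] at hσ
      obtain ⟨hne, -, ha, hb⟩ := hσ
      have hf := (gInv_props x hx σ ha hb hne).2.2.2.2.2
      rw [hf]; ring
    · intro σ hσ _
      rw [mem_erase, mem_filter] at hσ
      obtain ⟨hne, -, ha, hb⟩ := hσ
      exact (gInv_props x hx σ ha hb hne).2.2.2.2.1
    · intro σ hσ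
      rw [mem_erase, mem_filter] at hσ
      obtain ⟨hne, -, ha, hb⟩ := hσ
      obtain ⟨ha2, hb2, hne2, -⟩ := gInv_props x hx σ ha hb hne
      rw [mem_erase, mem_filter]
      exact ⟨hne2, mem_univ _, ha2, hb2⟩
    · intro σ hσ
      rw [mem_erase, mem_filter] at hσ
      obtain ⟨hne, -, ha, hb⟩ := hσ
      exact (gInv_props x hx σ ha hb hne).2.2.2.1
  rw [hzero, zero_add]
  have hid : ∀ i : Fin N, (1 : Equiv.Perm (Fin (2*N))) ⟨2*i.1, by have := i.2; omega⟩ <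
      (1 : Equiv.Perm (Fin (2*N))) ⟨2*i.1+1, by have := i.2; omega⟩ := by
    intro i
    simp only [Equiv.Perm.one_apply, Fin.mk_lt_mk]
    omega
  rw [fterm_eq x hx 1 hid]
  have hL : (∏ k : Fin (2 * N),
        if Odd (k : ℕ) then (if Even (x k) then (1 : ℝ) else 0)
        else (if Odd (x k) then (1 : ℝ) else 0)) =
      (∏ m : Fin N, ((if Odd (x ⟨2*m.1, by have := m.2; omega⟩) then (1:ℝ) else 0) *
        (if Even (x ⟨2*m.1+1, by have := m.2; omega⟩) then (1:ℝ) else 0))) := by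
    rw [prod_fin_double (fun k => if Odd (k : ℕ) then (if Even (x k) then (1 : ℝ) else 0)
        else (if Odd (x k) then (1 : ℝ) else 0))]
    apply prod_congr rfl
    intro m _
    have hm := m.2
    have h1 : ¬ Odd (((⟨2*m.1, by omega⟩ : Fin (2*N)) : ℕ)) := by
      simp only [Nat.odd_iff]
      omega
    have h2 : Odd (((⟨2*m.1+1, by omega⟩ : Fin (2*N)) : ℕ)) := by
      simp only [Nat.odd_iff]
      omega
    rw [if_neg h1, if_pos h2]
  rw [hL]
  simp only [Equiv.Perm.sign_one, Equiv.Perm.one_apply]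
  rw [prod_mul_distrib]
  push_cast
  ring
end

section
/- Let π be a finite point configuration in the triangle △₊ = {(x,t) : t ∈ [0,T], |x| ≤ T−t} in general position, and let π̃ be its symmetrization with respect to the t=0 axis (points of π together with their reflections). For k ≥ 1, let a_k(π) denote the maximal total number of points of π coverable by k disjoint increasing chains (directed polymers) with respect to the partial order (x,t) ≤ (x',t') iff t'−t ≥ |x'−x|. Then a_k(π̃) = 2·a_k(π) for all k. -/
open Finset

/-- Light-cone partial order on space-time points `(x,t)`:
`(x,t) ≤ (x',t')` iff `t' - t ≥ |x' - x|`. -/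
def lightLE (p q : ℝ × ℝ) : Prop := |q.1 - p.1| ≤ q.2 - p.2

/-- `coverNum k π` is the maximal total number of points of the configuration `π`
coverable by `k` pairwise disjoint increasing chains for the light-cone order. -/
noncomputable def coverNum (k : ℕ) (π : Finset (ℝ × ℝ)) : ℕ :=
  sSup {n : ℕ | ∃ C : Fin k → Finset (ℝ × ℝ),
    (∀ i, C i ⊆ π) ∧ (∀ i j, i ≠ j → Disjoint (C i) (C j)) ∧
    (∀ i, IsChain lightLE (C i : Set (ℝ × ℝ))) ∧ n = ∑ i, (C i).card}

/-- The symmetrization of a configuration with respect to the `t = 0` axis. -/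
noncomputable def symmetrize (π : Finset (ℝ × ℝ)) : Finset (ℝ × ℝ) :=
  π ∪ π.image (fun p => (p.1, -p.2))

namespace CoverAux

/-- reflection through t = 0 -/
def rfl2 (p : ℝ × ℝ) : ℝ × ℝ := (p.1, -p.2)

lemma rfl2_inj : Function.Injective rfl2 := by
  intro p q h
  simp only [rfl2, Prod.mk.injEq, neg_inj] at h
  exact Prod.ext h.1 h.2

lemma light_rfl2 {p q : ℝ × ℝ} : lightLE (rfl2 p) (rfl2 q) ↔ lightLE q p := by
  unfold lightLE rfl2
  rw [show ((q.1, -q.2) : ℝ × ℝ).1 - ((p.1, -p.2) : ℝ × ℝ).1 = q.1 - p.1 from rfl,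
      abs_sub_comm]
  constructor <;> intro h <;> (simp only [] at h ⊢; linarith [h])

/-- the covering sets are bounded by the cardinality of the configuration -/
lemma sum_le_card {k : ℕ} {π : Finset (ℝ × ℝ)} {C : Fin k → Finset (ℝ × ℝ)}
    (hsub : ∀ i, C i ⊆ π) (hdisj : ∀ i j, i ≠ j → Disjoint (C i) (C j)) :
    ∑ i, (C i).card ≤ π.card := by
  classical
  rw [← Finset.card_biUnion (fun i _ j _ hij => hdisj i j hij)]
  refine Finset.card_le_card ?_
  intro x hx
  rcases Finset.mem_biUnion.mp hx with ⟨i, _, hi⟩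
  exact hsub i hi

lemma bddAbove (k : ℕ) (π : Finset (ℝ × ℝ)) :
    BddAbove {n : ℕ | ∃ C : Fin k → Finset (ℝ × ℝ),
      (∀ i, C i ⊆ π) ∧ (∀ i j, i ≠ j → Disjoint (C i) (C j)) ∧
      (∀ i, IsChain lightLE (C i : Set (ℝ × ℝ))) ∧ n = ∑ i, (C i).card} := by
  refine ⟨π.card, ?_⟩
  rintro n ⟨C, hsub, hdisj, _, rfl⟩
  exact sum_le_card hsub hdisj

lemma nonempty (k : ℕ) (π : Finset (ℝ × ℝ)) :
    Set.Nonempty {n : ℕ | ∃ C : Fin k → Finset (ℝ × ℝ),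
      (∀ i, C i ⊆ π) ∧ (∀ i j, i ≠ j → Disjoint (C i) (C j)) ∧
      (∀ i, IsChain lightLE (C i : Set (ℝ × ℝ))) ∧ n = ∑ i, (C i).card} := by
  refine ⟨0, fun _ => ∅, fun i => Finset.empty_subset _, fun i j _ => Finset.disjoint_empty_left _, ?_, by simp⟩
  intro i; intro a ha; simp at ha

end CoverAux

open CoverAux in
/-- For a finite configuration `π` in the triangle `△₊` in general position and its
symmetrization `π̃`, one has `a_k(π̃) = 2 a_k(π)` for all `k ≥ 1`. -/
theorem coverNum_symmetrize (T : ℝ) (hT : 0 < T) (π : Finset (ℝ × ℝ))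
    (htriangle : ∀ p ∈ π, 0 < p.2 ∧ p.2 ≤ T ∧ |p.1| ≤ T - p.2)
    (hgen : ∀ p ∈ π, ∀ q ∈ π, p ≠ q → p.1 + p.2 ≠ q.1 + q.2 ∧ p.1 - p.2 ≠ q.1 - q.2)
    (k : ℕ) (hk : 1 ≤ k) :
    coverNum k (symmetrize π) = 2 * coverNum k π := by
  classical
  have hpos : ∀ p ∈ π, 0 < p.2 := fun p hp => (htriangle p hp).1
  -- membership in symmetrize
  have hmem_pos : ∀ p ∈ symmetrize π, 0 < p.2 → p ∈ π := by
    intro p hp h0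
    rcases Finset.mem_union.mp hp with h | h
    · exact h
    · rcases Finset.mem_image.mp h with ⟨q, hq, rfl⟩
      exact absurd h0 (by simp; linarith [hpos q hq])
  have hmem_neg : ∀ p ∈ symmetrize π, p.2 < 0 → rfl2 p ∈ π := by
    intro p hp h0
    rcases Finset.mem_union.mp hp with h | h
    · exact absurd (hpos p h) (by linarith)
    · rcases Finset.mem_image.mp h with ⟨q, hq, rfl⟩
      simpa [rfl2] using hq
  have hne : ∀ p ∈ symmetrize π, p.2 ≠ 0 := by
    intro p hp
    rcases Finset.mem_union.mp hp with h | h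
    · exact ne_of_gt (hpos p h)
    · rcases Finset.mem_image.mp h with ⟨q, hq, rfl⟩
      simpa using ne_of_lt (by simpa using neg_neg_of_pos (hpos q hq) : (-q.2 : ℝ) < 0)
  refine le_antisymm ?_ ?_
  · -- upper bound
    refine csSup_le (nonempty k (symmetrize π)) ?_
    rintro n ⟨C, hsub, hdisj, hchain, rfl⟩
    set A : Fin k → Finset (ℝ × ℝ) := fun i => (C i).filter (fun p => 0 < p.2) with hA
    set B : Fin k → Finset (ℝ × ℝ) := fun i => ((C i).filter (fun p => p.2 < 0)).image rfl2 with hB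
    have hAsub : ∀ i, A i ⊆ π := by
      intro i p hp
      rw [hA, Finset.mem_filter] at hp
      exact hmem_pos p (hsub i hp.1) hp.2
    have hBsub : ∀ i, B i ⊆ π := by
      intro i p hp
      rw [hB] at hp
      rcases Finset.mem_image.mp hp with ⟨q, hq, rfl⟩
      rw [Finset.mem_filter] at hq
      exact hmem_neg q (hsub i hq.1) hq.2
    have hAdisj : ∀ i j, i ≠ j → Disjoint (A i) (A j) :=
      fun i j hij => (hdisj i j hij).mono (Finset.filter_subset _ _) (Finset.filter_subset _ _)
    have hBdisj : ∀ i j, i ≠ j → Disjoint (B i) (B j) := by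
      intro i j hij
      rw [hB]
      exact (Finset.disjoint_image rfl2_inj).mpr
        (((hdisj i j hij).mono (Finset.filter_subset _ _) (Finset.filter_subset _ _)))
    have hAchain : ∀ i, IsChain lightLE ((A i : Set (ℝ × ℝ))) := by
      intro i
      refine (hchain i).mono ?_
      intro x hx
      simp only [hA, Finset.coe_filter, Set.mem_setOf_eq] at hx
      exact hx.1
    have hBchain : ∀ i, IsChain lightLE ((B i : Set (ℝ × ℝ))) := by
      intro i a ha b hb hab
      simp only [hB, Finset.coe_image, Set.mem_image, Finset.mem_coe, Finset.mem_filter] at ha hb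
      rcases ha with ⟨p, ⟨hp, _⟩, rfl⟩
      rcases hb with ⟨q, ⟨hq, _⟩, rfl⟩
      have hpq : p ≠ q := fun h => hab (by rw [h])
      rcases hchain i hp hq hpq with h | h
      · exact Or.inr (light_rfl2.mpr h)
      · exact Or.inl (light_rfl2.mpr h)
    have hcard : ∀ i, (C i).card = (A i).card + (B i).card := by
      intro i
      have h1 : (B i).card = ((C i).filter (fun p => p.2 < 0)).card := by
        rw [hB]; exact Finset.card_image_of_injective _ rfl2_inj
      have h2 : (C i).filter (fun p => p.2 < 0) = (C i).filter (fun p => ¬ 0 < p.2) := by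
        refine Finset.filter_congr ?_
        intro p hp
        have := hne p (hsub i hp)
        constructor <;> intro h
        · simp; linarith
        · simp at h; rcases lt_or_eq_of_le h with h' | h'
          · exact h'
          · exact absurd h' this
      rw [h1, h2, hA]
      exact (Finset.card_filter_add_card_filter_not (p := fun p : ℝ × ℝ => 0 < p.2)).symm
    have hAle : ∑ i, (A i).card ≤ coverNum k π :=
      le_csSup (bddAbove k π) ⟨A, hAsub, hAdisj, hAchain, rfl⟩
    have hBle : ∑ i, (B i).card ≤ coverNum k π :=
      le_csSup (bddAbove k π) ⟨B, hBsub, hBdisj, hBchain, rfl⟩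
    calc ∑ i, (C i).card = ∑ i, ((A i).card + (B i).card) := by
            exact Finset.sum_congr rfl (fun i _ => hcard i)
      _ = ∑ i, (A i).card + ∑ i, (B i).card := Finset.sum_add_distrib
      _ ≤ coverNum k π + coverNum k π := add_le_add hAle hBle
      _ = 2 * coverNum k π := (two_mul _).symm
  · -- lower bound
    obtain ⟨C, hsub, hdisj, hchain, hval⟩ :=
      Nat.sSup_mem (nonempty k π) (bddAbove k π)
    -- elements of C i have positive t
    have hCpos : ∀ i, ∀ p ∈ C i, 0 < p.2 := fun i p hp => hpos p (hsub i hp)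
    set D : Fin k → Finset (ℝ × ℝ) := fun i => C i ∪ (C i).image rfl2 with hD
    have hsignDisj : ∀ (s t : Finset (ℝ × ℝ)), (∀ p ∈ s, 0 < p.2) → (∀ p ∈ t, p.2 < 0) →
        Disjoint s t := by
      intro s t hs ht
      rw [Finset.disjoint_left]
      intro p hp hpt
      exact absurd (hs p hp) (by linarith [ht p hpt])
    have hImgNeg : ∀ i, ∀ p ∈ (C i).image rfl2, p.2 < 0 := by
      intro i p hp
      rcases Finset.mem_image.mp hp with ⟨q, hq, rfl⟩
      simpa [rfl2] using hCpos i q hq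
    have hDsub : ∀ i, D i ⊆ symmetrize π := by
      intro i
      rw [hD]
      refine Finset.union_subset ?_ ?_
      · exact (hsub i).trans (Finset.subset_union_left)
      · refine Finset.Subset.trans (Finset.image_subset_image (hsub i)) ?_
        exact Finset.Subset.trans (by rfl) (Finset.subset_union_right)
    have hDdisj : ∀ i j, i ≠ j → Disjoint (D i) (D j) := by
      intro i j hij
      rw [hD]
      refine Finset.disjoint_union_left.mpr
        ⟨Finset.disjoint_union_right.mpr
          ⟨hdisj i j hij, hsignDisj _ _ (hCpos i) (hImgNeg j)⟩,
         Finset.disjoint_union_right.mpr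
          ⟨(hsignDisj _ _ (hCpos j) (hImgNeg i)).symm,
           (Finset.disjoint_image rfl2_inj).mpr (hdisj i j hij)⟩⟩
    have hDchain : ∀ i, IsChain lightLE ((D i : Set (ℝ × ℝ))) := by
      intro i a ha b hb hab
      rw [hD] at ha hb
      simp only [Finset.coe_union, Set.mem_union, Finset.mem_coe, Finset.coe_image,
        Set.mem_image] at ha hb
      -- key: any point of C i is ≥ any reflected point of C i
      have key : ∀ p ∈ C i, ∀ q ∈ C i, lightLE (rfl2 q) p := by
        intro p hp q hq
        have hp2 := hCpos i p hp
        have hq2 := hCpos i q hq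
        have habs : |p.1 - q.1| ≤ p.2 + q.2 := by
          by_cases hpq : p = q
          · subst hpq; simp; linarith
          · rcases hchain i hp hq hpq with h | h
            · unfold lightLE at h; rw [abs_sub_comm] at h; linarith [abs_nonneg (p.1 - q.1)]
            · unfold lightLE at h; linarith [abs_nonneg (p.1 - q.1)]
        show |p.1 - (rfl2 q).1| ≤ p.2 - (rfl2 q).2
        simpa [rfl2] using (by linarith [habs] : |p.1 - q.1| ≤ p.2 - (-q.2))
      rcases ha with ha | ⟨p, hp, rfl⟩
      · rcases hb with hb | ⟨q, hq, rfl⟩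
        · exact hchain i ha hb hab
        · exact Or.inr (key a ha q (by simpa using hq))
      · rcases hb with hb | ⟨q, hq, rfl⟩
        · exact Or.inl (key b hb p (by simpa using hp))
        · have hpq : p ≠ q := fun h => hab (by rw [h])
          rcases hchain i (by simpa using hp) (by simpa using hq) hpq with h | h
          · exact Or.inr (light_rfl2.mpr h)
          · exact Or.inl (light_rfl2.mpr h)
    have hDcard : ∀ i, (D i).card = 2 * (C i).card := by
      intro i
      rw [hD]
      rw [Finset.card_union_of_disjoint (hsignDisj _ _ (hCpos i) (hImgNeg i)),
        Finset.card_image_of_injective _ rfl2_inj]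
      ring
    have : 2 * coverNum k π ∈ {n : ℕ | ∃ C : Fin k → Finset (ℝ × ℝ),
        (∀ i, C i ⊆ symmetrize π) ∧ (∀ i j, i ≠ j → Disjoint (C i) (C j)) ∧
        (∀ i, IsChain lightLE (C i : Set (ℝ × ℝ))) ∧ n = ∑ i, (C i).card} := by
      refine ⟨D, hDsub, hDdisj, hDchain, ?_⟩
      have hval' : coverNum k π = ∑ i, (C i).card := hval
      rw [hval']
      rw [Finset.mul_sum]
      exact Finset.sum_congr rfl (fun i _ => (hDcard i).symm)
    exact le_csSup (bddAbove k (symmetrize π)) this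
end

section
/- Let π be a Poisson-type point configuration in △₊ whose RSK Young tableau S(π) has shape (λ₁,…,λ_m), and let π̃ be the symmetrization of π with respect to t=0. Then S(π̃) has shape (2λ₁,…,2λ_m). -/
open Finset

/-! ### Auxiliary material -/

/-- Reflection in the `t = 0` axis. -/
def Rfl : ℝ × ℝ → ℝ × ℝ := fun p => (p.1, -p.2)

lemma Rfl_inj : Function.Injective Rfl := by
  intro p q h
  simp only [Rfl, Prod.mk.injEq, neg_inj] at h
  exact Prod.ext h.1 h.2

lemma Rfl_Rfl (p : ℝ × ℝ) : Rfl (Rfl p) = p := by simp [Rfl]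

lemma symmetrize_eq (π : Finset (ℝ × ℝ)) : symmetrize π = π ∪ π.image Rfl := rfl

lemma lightLE_Rfl {p q : ℝ × ℝ} : lightLE (Rfl q) (Rfl p) ↔ lightLE p q := by
  unfold lightLE Rfl
  dsimp
  rw [abs_sub_comm]
  constructor <;> intro h <;> linarith

lemma chain_image {s : Finset (ℝ × ℝ)} (h : IsChain lightLE (s : Set (ℝ × ℝ))) :
    IsChain lightLE ((s.image Rfl : Finset (ℝ × ℝ)) : Set (ℝ × ℝ)) := by
  rw [Finset.coe_image]
  rintro _ ⟨p, hp, rfl⟩ _ ⟨q, hq, rfl⟩ hne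
  have hpq : p ≠ q := fun e => hne (by rw [e])
  rcases h hp hq hpq with h1 | h1
  · exact Or.inr (lightLE_Rfl.2 h1)
  · exact Or.inl (lightLE_Rfl.2 h1)

/-- The defining set of `coverNum`. -/
def coverSet (k : ℕ) (π : Finset (ℝ × ℝ)) : Set ℕ :=
  {n : ℕ | ∃ C : Fin k → Finset (ℝ × ℝ),
    (∀ i, C i ⊆ π) ∧ (∀ i j, i ≠ j → Disjoint (C i) (C j)) ∧
    (∀ i, IsChain lightLE (C i : Set (ℝ × ℝ))) ∧ n = ∑ i, (C i).card}

lemma coverNum_eq (k : ℕ) (π : Finset (ℝ × ℝ)) : coverNum k π = sSup (coverSet k π) := rfl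

lemma coverSet_bdd (k : ℕ) (π : Finset (ℝ × ℝ)) : BddAbove (coverSet k π) := by
  refine ⟨π.card, ?_⟩
  rintro n ⟨C, hsub, hdisj, _, rfl⟩
  rw [← Finset.card_biUnion (fun i _ j _ h => hdisj i j h)]
  exact Finset.card_le_card (Finset.biUnion_subset.2 fun i _ => hsub i)

lemma zero_mem_coverSet (k : ℕ) (π : Finset (ℝ × ℝ)) : 0 ∈ coverSet k π := by
  refine ⟨fun _ => ∅, fun _ => Finset.empty_subset _, fun _ _ _ => by simp, fun _ => ?_, by simp⟩
  simp only [Finset.coe_empty]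
  exact IsChain.empty

lemma le_coverNum {k : ℕ} {π : Finset (ℝ × ℝ)} {n : ℕ} (h : n ∈ coverSet k π) :
    n ≤ coverNum k π := le_csSup (coverSet_bdd k π) h

lemma coverNum_mem (k : ℕ) (π : Finset (ℝ × ℝ)) : coverNum k π ∈ coverSet k π :=
  Nat.sSup_mem ⟨0, zero_mem_coverSet k π⟩ (coverSet_bdd k π)

/-- Doubling lemma for `coverNum` under symmetrization. -/
lemma coverNum_symmetrize_s4 (k : ℕ) (π : Finset (ℝ × ℝ)) (hpos : ∀ p ∈ π, 0 < p.2) :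
    coverNum k (symmetrize π) = 2 * coverNum k π := by
  have hneg : ∀ p ∈ π.image Rfl, p.2 < 0 := by
    intro p hp
    rw [Finset.mem_image] at hp
    rcases hp with ⟨q, hq, rfl⟩
    have := hpos q hq
    simp only [Rfl]
    linarith
  have hdisjPI : ∀ {s t : Finset (ℝ × ℝ)}, s ⊆ π → t ⊆ π.image Rfl → Disjoint s t := by
    intro s t hs ht
    rw [Finset.disjoint_left]
    intro a ha hat
    have h1 := hpos a (hs ha)
    have h2 := hneg a (ht hat)
    linarith
  apply le_antisymm
  · -- upper bound
    rw [coverNum_eq]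
    refine csSup_le ⟨0, zero_mem_coverSet _ _⟩ ?_
    rintro n ⟨D, hsub, hdisj, hchain, rfl⟩
    set A : Fin k → Finset (ℝ × ℝ) := fun i => D i ∩ π with hA
    set B' : Fin k → Finset (ℝ × ℝ) := fun i => D i ∩ π.image Rfl with hB'
    set B : Fin k → Finset (ℝ × ℝ) := fun i => (B' i).image Rfl with hB
    have hDsplit : ∀ i, D i = A i ∪ B' i := by
      intro i
      rw [hA, hB']
      dsimp only
      rw [← Finset.inter_union_distrib_left]
      exact (Finset.inter_eq_left.mpr (hsub i)).symm
    have hcardD : ∀ i, (D i).card = (A i).card + (B i).card := by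
      intro i
      rw [hDsplit i, Finset.card_union_of_disjoint
        (hdisjPI Finset.inter_subset_right Finset.inter_subset_right), hB,
        Finset.card_image_of_injective _ Rfl_inj]
    have hAmem : (∑ i, (A i).card) ∈ coverSet k π := by
      refine ⟨A, fun i => Finset.inter_subset_right, ?_, ?_, rfl⟩
      · intro i j hij
        exact (hdisj i j hij).mono Finset.inter_subset_left Finset.inter_subset_left
      · intro i
        exact IsChain.mono (by exact_mod_cast Finset.inter_subset_left) (hchain i)
    have hBmem : (∑ i, (B i).card) ∈ coverSet k π := by
      refine ⟨B, ?_, ?_, ?_, rfl⟩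
      · intro i
        have h1 : B i ⊆ (π.image Rfl).image Rfl :=
          Finset.image_subset_image Finset.inter_subset_right
        have h2 : (π.image Rfl).image Rfl = π := by
          rw [Finset.image_image]
          ext a
          simp [Function.comp, Rfl_Rfl]
        rwa [h2] at h1
      · intro i j hij
        refine (Finset.disjoint_image Rfl_inj).mpr ?_
        exact (hdisj i j hij).mono Finset.inter_subset_left Finset.inter_subset_left
      · intro i
        exact chain_image (IsChain.mono (by exact_mod_cast Finset.inter_subset_left) (hchain i))
    calc ∑ i, (D i).card = ∑ i, ((A i).card + (B i).card) := by
          exact Finset.sum_congr rfl fun i _ => hcardD i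
      _ = (∑ i, (A i).card) + ∑ i, (B i).card := Finset.sum_add_distrib
      _ ≤ coverNum k π + coverNum k π := Nat.add_le_add (le_coverNum hAmem) (le_coverNum hBmem)
      _ = 2 * coverNum k π := by ring
  · -- lower bound
    obtain ⟨C, hsub, hdisj, hchain, hn⟩ := coverNum_mem k π
    set D : Fin k → Finset (ℝ × ℝ) := fun i => C i ∪ (C i).image Rfl with hD
    have hmixed : ∀ p q : ℝ × ℝ, 0 < p.2 → 0 < q.2 →
        (p = q ∨ lightLE p q ∨ lightLE q p) → lightLE (Rfl q) p := by
      intro p q hp hq h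
      unfold lightLE Rfl at *
      dsimp only at *
      rcases h with rfl | h | h
      · simp only [sub_self, abs_zero]; linarith
      · rw [abs_sub_comm] at h; linarith
      · linarith
    have hmem : (2 * coverNum k π) ∈ coverSet k (symmetrize π) := by
      refine ⟨D, ?_, ?_, ?_, ?_⟩
      · intro i
        rw [symmetrize_eq]
        exact Finset.union_subset_union (hsub i) (Finset.image_subset_image (hsub i))
      · intro i j hij
        rw [hD]
        dsimp only
        rw [Finset.disjoint_union_left, Finset.disjoint_union_right,
          Finset.disjoint_union_right]
        refine ⟨⟨hdisj i j hij, hdisjPI (hsub i) (Finset.image_subset_image (hsub j))⟩,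
          (hdisjPI (hsub j) (Finset.image_subset_image (hsub i))).symm,
          (Finset.disjoint_image Rfl_inj).mpr (hdisj i j hij)⟩
      · intro i
        intro a ha b hb hne
        rw [Finset.mem_coe, Finset.mem_union] at ha hb
        rcases ha with ha | ha
        · rcases hb with hb | hb
          · exact hchain i (Finset.mem_coe.mpr ha) (Finset.mem_coe.mpr hb) hne
          · rw [Finset.mem_image] at hb
            rcases hb with ⟨q, hq, rfl⟩
            right
            refine hmixed a q (hpos a (hsub i ha)) (hpos q (hsub i hq)) ?_
            by_cases h : a = q
            · exact Or.inl h
            · exact Or.inr (hchain i (Finset.mem_coe.mpr ha) (Finset.mem_coe.mpr hq) h)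
        · rcases hb with hb | hb
          · rw [Finset.mem_image] at ha
            rcases ha with ⟨q, hq, rfl⟩
            left
            refine hmixed b q (hpos b (hsub i hb)) (hpos q (hsub i hq)) ?_
            by_cases h : b = q
            · exact Or.inl h
            · exact Or.inr (hchain i (Finset.mem_coe.mpr hb) (Finset.mem_coe.mpr hq) h)
          · exact chain_image (hchain i) (by rw [Finset.mem_coe]; exact ha)
              (by rw [Finset.mem_coe]; exact hb) hne
      · have : ∀ i, (D i).card = 2 * (C i).card := by
          intro i
          rw [hD]
          dsimp only
          rw [Finset.card_union_of_disjoint (hdisjPI (hsub i)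
            (Finset.image_subset_image (hsub i))),
            Finset.card_image_of_injective _ Rfl_inj]
          ring
        rw [Finset.sum_congr rfl fun i _ => this i, ← Finset.mul_sum, hn]
    exact le_coverNum hmem

/-- Let `π` be a configuration in the triangle `△₊` in general position, whose RSK
Young-tableau shape `(λ₁,…,λ_m)` is characterized (via Greene's theorem) by
`λ₁ + ⋯ + λ_k = a_k(π)`, and let `π̃` be its symmetrization, with shape
`(λ̃₁,…,λ̃_m)` characterized in the same way.  Then `λ̃_i = 2 λ_i` for all `i`. -/
theorem shape_symmetrize_doubles (T : ℝ) (hT : 0 < T) (π : Finset (ℝ × ℝ))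
    (htriangle : ∀ p ∈ π, 0 < p.2 ∧ p.2 ≤ T ∧ |p.1| ≤ T - p.2)
    (hgen : ∀ p ∈ π, ∀ q ∈ π, p ≠ q → p.1 + p.2 ≠ q.1 + q.2 ∧ p.1 - p.2 ≠ q.1 - q.2)
    (m : ℕ) (lam lamt : ℕ → ℕ)
    (hlam_mono : Antitone lam) (hlam_supp : ∀ i, m ≤ i → lam i = 0)
    (hlamt_mono : Antitone lamt) (hlamt_supp : ∀ i, m ≤ i → lamt i = 0)
    (hGreene : ∀ k, 1 ≤ k → k ≤ m → ∑ i ∈ Finset.range k, lam i = coverNum k π)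
    (hGreene' : ∀ k, 1 ≤ k → k ≤ m →
      ∑ i ∈ Finset.range k, lamt i = coverNum k (symmetrize π)) :
    ∀ i < m, lamt i = 2 * lam i := by
  have hpos : ∀ p ∈ π, 0 < p.2 := fun p hp => (htriangle p hp).1
  have hcov : ∀ k, 1 ≤ k → k ≤ m →
      ∑ i ∈ Finset.range k, lamt i = 2 * ∑ i ∈ Finset.range k, lam i := by
    intro k h1 h2
    rw [hGreene k h1 h2, hGreene' k h1 h2, coverNum_symmetrize_s4 k π hpos]
  intro i hi
  have h1 := hcov (i + 1) (by omega) (by omega)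
  have h2 : ∑ j ∈ Finset.range i, lamt j = 2 * ∑ j ∈ Finset.range i, lam j := by
    rcases Nat.eq_zero_or_pos i with rfl | hp
    · simp
    · exact hcov i hp (le_of_lt hi)
  rw [Finset.sum_range_succ, Finset.sum_range_succ, mul_add, h2] at h1
  omega
end
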